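/- arXiv:1705.04458 — 3 statements merged into one kernel-verified Lean document; each statement's English description precedes it below -/
import Mathlib

section
/- For σ > 0 and c > 0, the function Φ_c(x) = (2(σ+1)c / (σ²(cx)² + 1))^{1/(2σ)} is a positive, even, smooth solution on ℝ of the equation -Φ'' + (c/2)·Φ^{2σ+1} - ((2σ+1)/(2σ+2)²)·Φ^{4σ+1} = 0. -/
open Real

noncomputable def Phi (σ c : ℝ) (x : ℝ) : ℝ :=
  (2 * (σ + 1) * c / (σ ^ 2 * (c * x) ^ 2 + 1)) ^ (1 / (2 * σ))

theorem Phi_solves_ODE (σ c : ℝ) (hσ : 0 < σ) (hc : 0 < c) :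
    (∀ x : ℝ, 0 < Phi σ c x) ∧
    (∀ x : ℝ, Phi σ c (-x) = Phi σ c x) ∧
    ContDiff ℝ (⊤ : ℕ∞) (Phi σ c) ∧
    (∀ x : ℝ,
      -(deriv (deriv (Phi σ c)) x) + (c / 2) * (Phi σ c x) ^ (2 * σ + 1)
        - ((2 * σ + 1) / (2 * σ + 2) ^ 2) * (Phi σ c x) ^ (4 * σ + 1) = 0) := by
  have hσ1 : (0:ℝ) < σ + 1 := by linarith
  have hσne : σ ≠ 0 := hσ.ne'
  have hA : (0:ℝ) < 2 * (σ + 1) * c := by positivity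
  set A := 2 * (σ + 1) * c with hAdef
  set p := 1 / (2 * σ) with hpdef
  set k := σ ^ 2 * c ^ 2 with hkdef
  have hk : (0:ℝ) < k := by rw [hkdef]; positivity
  have hQ : ∀ x : ℝ, (0:ℝ) < k * x ^ 2 + 1 := fun x => by positivity
  have hqeq : ∀ x : ℝ, σ ^ 2 * (c * x) ^ 2 + 1 = k * x ^ 2 + 1 := fun x => by
    rw [hkdef]; ring
  have hPhiD : ∀ x : ℝ, Phi σ c x = (A / (k * x ^ 2 + 1)) ^ p := by
    intro x
    simp only [Phi]
    rw [hqeq, ← hAdef, ← hpdef]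
  have hPhi : ∀ x : ℝ, Phi σ c x = A ^ p * (k * x ^ 2 + 1) ^ (-p) := by
    intro x
    rw [hPhiD x, Real.div_rpow hA.le (hQ x).le, Real.rpow_neg (hQ x).le, div_eq_mul_inv]
  refine ⟨?_, ?_, ?_, ?_⟩
  · intro x
    rw [hPhiD x]
    exact Real.rpow_pos_of_pos (div_pos hA (hQ x)) _
  · intro x
    rw [hPhiD x, hPhiD (-x), show (-x)^2 = x^2 by ring]
  · rw [contDiff_iff_contDiffAt]
    intro x
    have h1 : ContDiffAt ℝ (⊤ : ℕ∞) (fun x : ℝ => 2 * (σ + 1) * c / (σ ^ 2 * (c * x) ^ 2 + 1)) x := by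
      apply ContDiffAt.div contDiffAt_const (by fun_prop)
      rw [hqeq]; exact (hQ x).ne'
    exact h1.rpow_const_of_ne (by rw [hqeq]; exact (div_pos hA (hQ x)).ne')
  · have hQd : ∀ x : ℝ, HasDerivAt (fun x : ℝ => k * x ^ 2 + 1) (2 * k * x) x := by
      intro x
      have := ((hasDerivAt_pow 2 x).const_mul k).add_const 1
      exact this.congr_deriv (by push_cast; ring)
    have hPhifun : Phi σ c = fun x : ℝ => A ^ p * (k * x ^ 2 + 1) ^ (-p) := funext hPhi
    have hD1 : ∀ x : ℝ, HasDerivAt (Phi σ c)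
        (A ^ p * (2 * k * x * (-p) * (k * x ^ 2 + 1) ^ (-p - 1))) x := by
      intro x
      rw [hPhifun]
      exact ((hQd x).rpow_const (Or.inl (hQ x).ne')).const_mul _
    have hderiv1 : deriv (Phi σ c)
        = fun x : ℝ => (A ^ p * (2 * k) * (-p)) * (x * (k * x ^ 2 + 1) ^ (-p - 1)) := by
      funext x
      rw [(hD1 x).deriv]; ring
    have hmid : ∀ x : ℝ, HasDerivAt (fun x : ℝ => x * (k * x ^ 2 + 1) ^ (-p - 1))
        (1 * (k * x ^ 2 + 1) ^ (-p - 1)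
          + x * (2 * k * x * (-p - 1) * (k * x ^ 2 + 1) ^ (-p - 1 - 1))) x := by
      intro x
      exact (hasDerivAt_id' (𝕜 := ℝ) x).mul ((hQd x).rpow_const (Or.inl (hQ x).ne'))
    have hderiv2 : ∀ x : ℝ, deriv (deriv (Phi σ c)) x
        = (A ^ p * (2 * k) * (-p)) * (1 * (k * x ^ 2 + 1) ^ (-p - 1)
          + x * (2 * k * x * (-p - 1) * (k * x ^ 2 + 1) ^ (-p - 1 - 1))) := by
      intro x
      rw [hderiv1]
      exact ((hmid x).const_mul _).deriv
    intro x
    have hQx := hQ x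
    have hQne : (k * x ^ 2 + 1) ≠ 0 := hQx.ne'
    have hAQ : (0:ℝ) < A / (k * x ^ 2 + 1) := div_pos hA hQx
    have hdivr : (A / (k * x ^ 2 + 1)) ^ p = A ^ p * (k * x ^ 2 + 1) ^ (-p) := by
      rw [Real.div_rpow hA.le hQx.le, Real.rpow_neg hQx.le, div_eq_mul_inv]
    have e1 : (k * x ^ 2 + 1) ^ (-p - 1) = (k * x ^ 2 + 1) ^ (-p) / (k * x ^ 2 + 1) := by
      rw [Real.rpow_sub hQx, Real.rpow_one]
    have e2 : (k * x ^ 2 + 1) ^ (-p - 1 - 1)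
        = (k * x ^ 2 + 1) ^ (-p) / (k * x ^ 2 + 1) / (k * x ^ 2 + 1) := by
      rw [Real.rpow_sub hQx, Real.rpow_sub hQx, Real.rpow_one]
    have hexp1 : p * (2 * σ + 1) = 1 + p := by
      rw [hpdef]; field_simp
    have hexp2 : p * (4 * σ + 1) = 2 + p := by
      rw [hpdef]; field_simp; ring
    have e3 : Phi σ c x ^ (2 * σ + 1)
        = (A / (k * x ^ 2 + 1)) * (A ^ p * (k * x ^ 2 + 1) ^ (-p)) := by
      rw [hPhiD x, ← Real.rpow_mul hAQ.le, hexp1, Real.rpow_add hAQ, Real.rpow_one, hdivr]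
    have e4 : Phi σ c x ^ (4 * σ + 1)
        = (A / (k * x ^ 2 + 1)) ^ (2:ℕ) * (A ^ p * (k * x ^ 2 + 1) ^ (-p)) := by
      rw [hPhiD x, ← Real.rpow_mul hAQ.le, hexp2,
        show (2:ℝ) + p = ((2:ℕ):ℝ) + p by norm_num,
        Real.rpow_add hAQ, Real.rpow_natCast, hdivr]
    rw [hderiv2 x, e3, e4, e1, e2]
    have h2σ2 : (2 * σ + 2) ≠ 0 := by positivity
    rw [hAdef, hpdef, hkdef]
    field_simp
    ring
end

section
/- For 0 < σ < 1 and c > 0, with φ_c the endpoint solitary wave profile, one has P(φ_c) + (c/2) M(φ_c) = (1/(2σ+2)) ∫_ℝ Φ_c^{2σ+2} dx > 0, where P(u) = Im ∫_ℝ u · conj(∂_x u) dx and M(u) = ∫ |u|² dx. -/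
/-!
Write `φ_c = Φ e^{iθ}` with `Φ = Phi σ c` real and `θ` the phase. Then `φ_c · conj φ_c'` has
imaginary part `-Φ² θ'` and `|φ_c|² = Φ²`, so `P + (c/2) M = ∫ Φ² (c/2 - θ') = (1/(2σ+2)) ∫ Φ^{2σ+2}`,
which is positive since `Φ > 0`. All integrals converge because `Φ^q` decays like `|x|^{-q/σ}`,
so it is integrable for `q > σ`.
-/

open Real MeasureTheory

noncomputable def soliton (σ c : ℝ) (x : ℝ) : ℂ :=
  (Phi σ c x : ℂ) *
    Complex.exp (Complex.I *
      (((c / 2) * x - (1 / (2 * σ + 2)) * ∫ y in (0:ℝ)..x, (Phi σ c y) ^ (2 * σ) : ℝ) : ℂ))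

/-- momentum `P(u) = Im ∫ u ⬝ conj (∂ₓ u)` -/
noncomputable def momentum (u : ℝ → ℂ) : ℝ :=
  ∫ x : ℝ, (u x * (starRingEnd ℂ) (deriv u x)).im

/-- mass `M(u) = ∫ |u|²` -/
noncomputable def mass (u : ℝ → ℂ) : ℝ :=
  ∫ x : ℝ, ‖u x‖ ^ 2

section Polar

open Complex

variable {Φ θ : ℝ → ℝ}

theorem hasDerivAt_ofReal_mul_exp_I_mul {Φ' θ' x : ℝ}
    (hΦ : HasDerivAt Φ Φ' x) (hθ : HasDerivAt θ θ' x) :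
    HasDerivAt (fun y => (Φ y : ℂ) * exp (I * θ y))
      ((Φ' + I * θ' * Φ x) * exp (I * θ x)) x := by
  have hexp := ((hθ.ofReal_comp).const_mul I).cexp
  exact (hΦ.ofReal_comp.mul hexp).congr_deriv (by ring)

theorem im_mul_conj_deriv_ofReal_mul_exp_I_mul {Φ' θ' x : ℝ}
    (hΦ : HasDerivAt Φ Φ' x) (hθ : HasDerivAt θ θ' x) :
    ((Φ x : ℂ) * exp (I * θ x) *
      starRingEnd ℂ (deriv (fun y => (Φ y : ℂ) * exp (I * θ y)) x)).im = -(Φ x ^ 2 * θ') := by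
  rw [(hasDerivAt_ofReal_mul_exp_I_mul hΦ hθ).deriv, mul_comm I, exp_mul_I]
  simp only [map_mul, map_add, conj_ofReal, conj_I, neg_mul, mul_neg, mul_im, mul_re, ofReal_re,
    add_re, cos_ofReal_re, sin_ofReal_re, I_re, mul_zero, sin_ofReal_im, I_im, mul_one, sub_self,
    add_zero, ofReal_im, add_im, cos_ofReal_im, zero_add, zero_mul, sub_zero, neg_re, one_mul,
    neg_zero, conj_im, neg_im, conj_re, neg_neg]
  linear_combination (-(Φ x ^ 2 * θ')) * Real.sin_sq_add_cos_sq (θ x)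

theorem norm_ofReal_mul_exp_I_mul_sq (r t : ℝ) : ‖(r : ℂ) * exp (I * t)‖ ^ 2 = r ^ 2 := by
  rw [norm_mul, norm_exp_I_mul_ofReal, norm_real, mul_one, Real.norm_eq_abs, sq_abs]

theorem momentum_ofReal_mul_exp_I_mul {Φ' θ' : ℝ → ℝ}
    (hΦ : ∀ x, HasDerivAt Φ (Φ' x) x) (hθ : ∀ x, HasDerivAt θ (θ' x) x) :
    momentum (fun x => (Φ x : ℂ) * exp (I * θ x)) = -∫ x, Φ x ^ 2 * θ' x := by
  rw [momentum, ← integral_neg]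
  exact congrArg _ (funext fun x => im_mul_conj_deriv_ofReal_mul_exp_I_mul (hΦ x) (hθ x))

theorem mass_ofReal_mul_exp_I_mul :
    mass (fun x => (Φ x : ℂ) * exp (I * θ x)) = ∫ x, Φ x ^ 2 := by
  simp only [mass, norm_ofReal_mul_exp_I_mul_sq]

end Polar

section Phi

variable {σ c : ℝ}

theorem Phi_base_pos (hσ : 0 < σ) (hc : 0 < c) (x : ℝ) :
    0 < 2 * (σ + 1) * c / (σ ^ 2 * (c * x) ^ 2 + 1) := by
  positivity

theorem Phi_pos (hσ : 0 < σ) (hc : 0 < c) (x : ℝ) : 0 < Phi σ c x :=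
  rpow_pos_of_pos (Phi_base_pos hσ hc x) _

theorem differentiable_Phi (hσ : 0 < σ) (hc : 0 < c) : Differentiable ℝ (Phi σ c) := fun x =>
  ((differentiableAt_const _).div (by fun_prop) (by positivity)).rpow_const
    (.inl (Phi_base_pos hσ hc x).ne')

theorem continuous_Phi_rpow (hσ : 0 < σ) (hc : 0 < c) {q : ℝ} (hq : 0 ≤ q) :
    Continuous fun x => Phi σ c x ^ q :=
  (differentiable_Phi hσ hc).continuous.rpow_const fun _ => .inr hq

/-- The shape of `integrable_rpow_neg_one_add_norm_sq`, rescaled by `σ c`. -/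
theorem Phi_rpow_eq (hσ : 0 < σ) (hc : 0 < c) (q x : ℝ) :
    Phi σ c x ^ q =
      (2 * (σ + 1) * c) ^ (q / (2 * σ)) * (1 + ‖σ * c * x‖ ^ 2) ^ (-(q / σ) / 2) := by
  have hD : σ ^ 2 * (c * x) ^ 2 + 1 = 1 + ‖σ * c * x‖ ^ 2 := by
    rw [Real.norm_eq_abs, sq_abs]; ring
  rw [Phi, ← rpow_mul (Phi_base_pos hσ hc x).le, div_rpow (by positivity) (by positivity), hD,
    div_eq_mul_inv, ← rpow_neg (by positivity), one_div_mul_eq_div, neg_div, div_div, mul_comm σ 2]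

theorem integrable_Phi_rpow (hσ : 0 < σ) (hc : 0 < c) {q : ℝ} (hq : σ < q) :
    Integrable fun x => Phi σ c x ^ q := by
  have hr : (Module.finrank ℝ ℝ : ℝ) < q / σ := by
    rw [Module.finrank_self, Nat.cast_one, one_lt_div hσ]; exact hq
  simp only [Phi_rpow_eq hσ hc]
  exact ((integrable_rpow_neg_one_add_norm_sq (μ := volume) hr).comp_mul_left'
    (by positivity)).const_mul _

noncomputable def phase (σ c x : ℝ) : ℝ :=
  (c / 2) * x - (1 / (2 * σ + 2)) * ∫ y in (0:ℝ)..x, (Phi σ c y) ^ (2 * σ)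

theorem soliton_eq (σ c : ℝ) :
    soliton σ c = fun x => (Phi σ c x : ℂ) * Complex.exp (Complex.I * phase σ c x) :=
  rfl

theorem hasDerivAt_phase (hσ : 0 < σ) (hc : 0 < c) (x : ℝ) :
    HasDerivAt (phase σ c) (c / 2 - (1 / (2 * σ + 2)) * Phi σ c x ^ (2 * σ)) x := by
  have hprim := ((continuous_Phi_rpow hσ hc (q := 2 * σ) (by positivity)).integral_hasStrictDerivAt
    0 x).hasDerivAt
  exact ((hasDerivAt_id x).const_mul (c / 2)).sub (hprim.const_mul _) |>.congr_deriv (by ring)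

end Phi

theorem momentum_mass_pos (σ c : ℝ) (hσ : 0 < σ) (hσ1 : σ < 1) (hc : 0 < c) :
    momentum (soliton σ c) + (c / 2) * mass (soliton σ c)
        = (1 / (2 * σ + 2)) * ∫ x : ℝ, (Phi σ c x) ^ (2 * σ + 2) ∧
    0 < momentum (soliton σ c) + (c / 2) * mass (soliton σ c) := by
  have hsq : Integrable fun x => Phi σ c x ^ 2 := by
    simpa only [rpow_two] using integrable_Phi_rpow hσ hc (q := 2) (by linarith)
  have hpow : Integrable fun x => Phi σ c x ^ (2 * σ + 2) := integrable_Phi_rpow hσ hc (by linarith)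
  have hpoint (x : ℝ) : Phi σ c x ^ 2 * (c / 2 - (1 / (2 * σ + 2)) * Phi σ c x ^ (2 * σ)) =
      c / 2 * Phi σ c x ^ 2 - 1 / (2 * σ + 2) * Phi σ c x ^ (2 * σ + 2) := by
    rw [rpow_add (Phi_pos hσ hc x), rpow_two]; ring
  have hsum : momentum (soliton σ c) + (c / 2) * mass (soliton σ c)
      = (1 / (2 * σ + 2)) * ∫ x : ℝ, (Phi σ c x) ^ (2 * σ + 2) := by
    rw [soliton_eq, mass_ofReal_mul_exp_I_mul,
      momentum_ofReal_mul_exp_I_mul (fun x => (differentiable_Phi hσ hc x).hasDerivAt)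
        (hasDerivAt_phase hσ hc)]
    simp only [hpoint]
    rw [integral_sub (hsq.const_mul _) (hpow.const_mul _), integral_const_mul, integral_const_mul]
    ring
  refine ⟨hsum, hsum ▸ mul_pos (by positivity) ?_⟩
  have hpos (x : ℝ) : 0 < Phi σ c x ^ (2 * σ + 2) := rpow_pos_of_pos (Phi_pos hσ hc x) _
  exact integral_pos_of_integrable_nonneg_nonzero (x := 0)
    (continuous_Phi_rpow hσ hc (by positivity)) hpow (fun x => (hpos x).le) (hpos 0).ne'
end

section
/- For 0 < σ < 1 and c > 0, the map c ↦ P(φ_c) + (c/2) M(φ_c) has positive derivative in c; equivalently, using the scalings P(φ_c) = c^{1/σ} P(φ_1) and M(φ_c) = c^{1/σ-1} M(φ_1), one has (1/σ) P(φ_1) + (1/2)(1/σ - 1) M(φ_1) > 0. -/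
open Real MeasureTheory

/-! Write `soliton σ 1 = Φ e^{iθ}` with real amplitude `Φ = Phi σ 1`. The momentum density is
`-Φ² θ'` and the mass density is `Φ²`; since `Φ^{2σ} = 2(σ+1)/(1+(σx)²)` and
`θ' = 1/2 - 1/(1+(σx)²)`, the substitution `x ↦ σx` turns both into combinations of
`J(t) = ∫ (1+x²)^{-t}` at `t = 1/σ` and `t = 1/σ + 1`. Integrating the derivative of
`x (1+x²)^{-t}` over `ℝ` gives `J(t+1) = (1 - 1/(2t)) J(t)`, after which the quantity equals
`(2(σ+1))^{1/σ} σ⁻¹ (t - 1) J(t)`, positive for `t = 1/σ > 1`. -/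

open Filter Topology

theorem integrable_one_add_sq_rpow_neg {t : ℝ} (ht : 1 / 2 < t) :
    Integrable fun x : ℝ => (1 + x ^ 2) ^ (-t) := by
  refine (integrable_rpow_neg_one_add_norm_sq (E := ℝ) (μ := volume) (r := 2 * t)
    (by simp; linarith)).congr (Eventually.of_forall fun x => ?_)
  simp only [Real.norm_eq_abs, sq_abs]
  ring_nf

theorem hasDerivAt_mul_one_add_sq_rpow_neg (t x : ℝ) :
    HasDerivAt (fun x : ℝ => x * (1 + x ^ 2) ^ (-t))
      ((1 - 2 * t) * (1 + x ^ 2) ^ (-t) + 2 * t * (1 + x ^ 2) ^ (-(t + 1))) x := by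
  have hpos : 0 < 1 + x ^ 2 := by positivity
  have hq : HasDerivAt (fun x : ℝ => 1 + x ^ 2) (2 * x) x := by
    simpa using ((hasDerivAt_pow 2 x).const_add 1)
  refine ((hasDerivAt_id x).mul (hq.rpow_const (p := -t) (Or.inl hpos.ne'))).congr_deriv ?_
  have hsplit : (1 + x ^ 2) ^ (-t) = (1 + x ^ 2) ^ (-(t + 1)) * (1 + x ^ 2) := by
    rw [← rpow_add_one hpos.ne']; ring_nf
  rw [hsplit, show -t - 1 = -(t + 1) by ring, id]
  ring

theorem tendsto_mul_one_add_sq_rpow_neg_cocompact {t : ℝ} (ht : 1 / 2 < t) :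
    Tendsto (fun x : ℝ => x * (1 + x ^ 2) ^ (-t)) (cocompact ℝ) (𝓝 0) := by
  have hq : Tendsto (fun x : ℝ => 1 + x ^ 2) (cocompact ℝ) atTop := by
    refine tendsto_atTop_add_const_left _ 1 ?_
    have := (tendsto_pow_atTop (α := ℝ) two_ne_zero).comp
      (tendsto_norm_cocompact_atTop (E := ℝ))
    simpa [Function.comp_def, Real.norm_eq_abs, sq_abs] using this
  refine squeeze_zero_norm (fun x => ?_)
    ((tendsto_rpow_neg_atTop (by linarith : 0 < t - 1 / 2)).comp hq)
  have hpos : 0 < 1 + x ^ 2 := by positivity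
  calc ‖x * (1 + x ^ 2) ^ (-t)‖ = |x| * (1 + x ^ 2) ^ (-t) := by
        rw [norm_mul, Real.norm_eq_abs, Real.norm_of_nonneg (rpow_nonneg hpos.le _)]
    _ ≤ (1 + x ^ 2) ^ (1 / 2 : ℝ) * (1 + x ^ 2) ^ (-t) := by
        gcongr
        rw [← sqrt_eq_rpow, ← sqrt_sq_eq_abs]
        exact sqrt_le_sqrt (by linarith)
    _ = (1 + x ^ 2) ^ (-(t - 1 / 2)) := by
        rw [← rpow_add hpos]; ring_nf

theorem integral_one_add_sq_rpow_neg_add_one {t : ℝ} (ht : 1 / 2 < t) :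
    ∫ x : ℝ, (1 + x ^ 2) ^ (-(t + 1))
      = (1 - 1 / (2 * t)) * ∫ x : ℝ, (1 + x ^ 2) ^ (-t) := by
  have hI₀ := integrable_one_add_sq_rpow_neg ht
  have hI₁ := integrable_one_add_sq_rpow_neg (t := t + 1) (by linarith)
  have hlim := tendsto_mul_one_add_sq_rpow_neg_cocompact ht
  have hzero := integral_of_hasDerivAt_of_tendsto (hasDerivAt_mul_one_add_sq_rpow_neg t)
    ((hI₀.const_mul _).add (hI₁.const_mul _))
    (hlim.mono_left atBot_le_cocompact) (hlim.mono_left atTop_le_cocompact)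
  rw [integral_add (hI₀.const_mul _) (hI₁.const_mul _), integral_const_mul,
    integral_const_mul, sub_zero] at hzero
  have ht₀ : t ≠ 0 := by positivity
  field_simp
  linarith

theorem integral_one_add_sq_rpow_neg_pos {t : ℝ} (ht : 1 / 2 < t) :
    0 < ∫ x : ℝ, (1 + x ^ 2) ^ (-t) :=
  integral_pos_of_integrable_nonneg_nonzero (x := 0)
    ((continuous_const.add (continuous_pow 2)).rpow_const
      fun x => Or.inl (by positivity : (1 + x ^ 2 : ℝ) ≠ 0))
    (integrable_one_add_sq_rpow_neg ht) (fun x => by positivity) (by norm_num)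

theorem im_mul_conj_deriv_ofReal_mul_exp {ρ θ : ℝ → ℝ} {x ρ' θ' : ℝ}
    (hρ : HasDerivAt ρ ρ' x) (hθ : HasDerivAt θ θ' x) :
    ((fun y => (ρ y : ℂ) * Complex.exp (Complex.I * θ y)) x *
      starRingEnd ℂ (deriv (fun y => (ρ y : ℂ) * Complex.exp (Complex.I * θ y)) x)).im
      = -(ρ x ^ 2 * θ') := by
  set E := Complex.exp (Complex.I * θ x)
  have hu : HasDerivAt (fun y => (ρ y : ℂ) * Complex.exp (Complex.I * θ y))
      (ρ' * E + ρ x * (E * (Complex.I * θ'))) x :=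
    hρ.ofReal_comp.mul (hθ.ofReal_comp.const_mul Complex.I).cexp
  have hunit : E * starRingEnd ℂ E = 1 := by
    rw [← Complex.exp_conj, ← Complex.exp_add]
    simp [Complex.conj_ofReal]
  rw [hu.deriv]
  have key : (ρ x : ℂ) * E * starRingEnd ℂ (ρ' * E + ρ x * (E * (Complex.I * θ')))
      = ((ρ x * ρ' : ℝ) : ℂ) - Complex.I * ((ρ x ^ 2 * θ' : ℝ) : ℂ) := by
    simp only [map_add, map_mul, Complex.conj_I, Complex.conj_ofReal]
    push_cast
    linear_combination ((ρ x : ℂ) * ρ' - Complex.I * (ρ x : ℂ) ^ 2 * θ') * hunit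
  rw [key]
  simp only [Complex.sub_im, Complex.ofReal_im, Complex.mul_im, Complex.I_re, Complex.I_im,
    Complex.ofReal_re]
  ring

section Soliton

variable {σ : ℝ}

theorem Phi_one_eq (x : ℝ) :
    Phi σ 1 x = (2 * (σ + 1) / (1 + (σ * x) ^ 2)) ^ (1 / (2 * σ)) := by
  unfold Phi
  congr 1
  ring

theorem Phi_one_rpow_two_mul (hσ : 0 < σ) (x : ℝ) :
    Phi σ 1 x ^ (2 * σ) = 2 * (σ + 1) / (1 + (σ * x) ^ 2) := by
  rw [Phi_one_eq, ← rpow_mul (by positivity), one_div_mul_cancel (by positivity), rpow_one]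

theorem Phi_one_sq (hσ : 0 < σ) (x : ℝ) :
    Phi σ 1 x ^ 2 = (2 * (σ + 1)) ^ (1 / σ) * (1 + (σ * x) ^ 2) ^ (-(1 / σ)) := by
  have hexp : 1 / (2 * σ) * ((2 : ℕ) : ℝ) = 1 / σ := by field_simp; norm_num
  rw [Phi_one_eq, ← rpow_natCast, ← rpow_mul (by positivity), hexp,
    div_rpow (by positivity) (by positivity), rpow_neg (by positivity), div_eq_mul_inv]

theorem differentiableAt_Phi_one (hσ : 0 < σ) (x : ℝ) : DifferentiableAt ℝ (Phi σ 1) x := by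
  rw [funext Phi_one_eq]
  have hq : 1 + (σ * x) ^ 2 ≠ 0 := by positivity
  have hbase : DifferentiableAt ℝ (fun x => 2 * (σ + 1) / (1 + (σ * x) ^ 2)) x := by
    fun_prop (disch := exact hq)
  exact hbase.rpow_const (Or.inl (by positivity))

theorem hasDerivAt_soliton_one_phase (hσ : 0 < σ) (x : ℝ) :
    HasDerivAt
      (fun x => 1 / 2 * x - 1 / (2 * σ + 2) * ∫ y in (0 : ℝ)..x, Phi σ 1 y ^ (2 * σ))
      (1 / 2 - 1 / (1 + (σ * x) ^ 2)) x := by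
  have hcont : Continuous fun y => Phi σ 1 y ^ (2 * σ) := by
    rw [funext (Phi_one_rpow_two_mul hσ)]
    exact continuous_const.div (by fun_prop)
      (fun y => by positivity : ∀ y, 1 + (σ * y) ^ 2 ≠ 0)
  refine (((hasDerivAt_id x).const_mul (1 / 2)).sub
    ((hcont.integral_hasStrictDerivAt 0 x).hasDerivAt.const_mul _)).congr_deriv ?_
  rw [Phi_one_rpow_two_mul hσ]
  field_simp

theorem soliton_one_norm_sq (hσ : 0 < σ) (x : ℝ) :
    ‖soliton σ 1 x‖ ^ 2 = (2 * (σ + 1)) ^ (1 / σ) * (1 + (σ * x) ^ 2) ^ (-(1 / σ)) := by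
  rw [soliton, norm_mul, Complex.norm_exp_I_mul_ofReal, mul_one, Complex.norm_real,
    Real.norm_eq_abs, sq_abs, Phi_one_sq hσ]

theorem soliton_one_im_mul_conj_deriv (hσ : 0 < σ) (x : ℝ) :
    (soliton σ 1 x * starRingEnd ℂ (deriv (soliton σ 1) x)).im
      = (2 * (σ + 1)) ^ (1 / σ) *
        ((1 + (σ * x) ^ 2) ^ (-(1 / σ + 1)) - 1 / 2 * (1 + (σ * x) ^ 2) ^ (-(1 / σ))) := by
  have hpos : 0 < 1 + (σ * x) ^ 2 := by positivity
  refine (im_mul_conj_deriv_ofReal_mul_exp (differentiableAt_Phi_one hσ x).hasDerivAt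
    (hasDerivAt_soliton_one_phase hσ x)).trans ?_
  rw [Phi_one_sq hσ, neg_add, rpow_add hpos, rpow_neg_one]
  ring

theorem mass_soliton_one (hσ : 0 < σ) :
    mass (soliton σ 1)
      = (2 * (σ + 1)) ^ (1 / σ) / σ * ∫ x : ℝ, (1 + x ^ 2) ^ (-(1 / σ)) := by
  simp only [mass, soliton_one_norm_sq hσ]
  rw [integral_const_mul, Measure.integral_comp_mul_left (fun y => (1 + y ^ 2) ^ (-(1 / σ))),
    abs_of_pos (inv_pos.2 hσ), smul_eq_mul]
  ring

theorem momentum_soliton_one (hσ : 0 < σ) (hσ2 : σ < 2) :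
    momentum (soliton σ 1) = (2 * (σ + 1)) ^ (1 / σ) / σ *
      ((∫ x : ℝ, (1 + x ^ 2) ^ (-(1 / σ + 1)))
        - 1 / 2 * ∫ x : ℝ, (1 + x ^ 2) ^ (-(1 / σ))) := by
  have ht : 1 / 2 < 1 / σ := one_div_lt_one_div_of_lt hσ hσ2
  have hI₁ := integrable_one_add_sq_rpow_neg (t := 1 / σ + 1) (by linarith)
  have hI₀ := (integrable_one_add_sq_rpow_neg ht).const_mul (1 / 2)
  simp only [momentum, soliton_one_im_mul_conj_deriv hσ]
  rw [integral_const_mul,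
    Measure.integral_comp_mul_left
      (fun y => (1 + y ^ 2) ^ (-(1 / σ + 1)) - 1 / 2 * (1 + y ^ 2) ^ (-(1 / σ))),
    abs_of_pos (inv_pos.2 hσ), smul_eq_mul, integral_sub hI₁ hI₀, integral_const_mul]
  ring

end Soliton

theorem dc_momentum_mass_pos (σ : ℝ) (hσ : 0 < σ) (hσ1 : σ < 1) :
    0 < (1 / σ) * momentum (soliton σ 1) + (1 / 2) * (1 / σ - 1) * mass (soliton σ 1) := by
  have ht : 1 < 1 / σ := by rw [lt_one_div one_pos hσ]; simpa
  rw [momentum_soliton_one hσ (by linarith), mass_soliton_one hσ,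
    integral_one_add_sq_rpow_neg_add_one (by linarith)]
  have hJ : 0 < ∫ x : ℝ, (1 + x ^ 2) ^ (-(1 / σ)) :=
    integral_one_add_sq_rpow_neg_pos (by linarith)
  have hC : 0 < (2 * (σ + 1)) ^ (1 / σ) / σ := by positivity
  set J := ∫ x : ℝ, (1 + x ^ 2) ^ (-(1 / σ))
  set C := (2 * (σ + 1)) ^ (1 / σ) / σ
  have hcollapse : 1 / σ * (C * ((1 - 1 / (2 * (1 / σ))) * J - 1 / 2 * J))
      + 1 / 2 * (1 / σ - 1) * (C * J) = (1 / σ - 1) * (C * J) := by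
    field_simp
    ring
  rw [hcollapse]
  exact mul_pos (by linarith) (mul_pos hC hJ)
end
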